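/- (Variance of the PRF estimator) Let w_1, ..., w_m be i.i.d. standard Gaussian random vectors on ℝ^d and let φ(x) = (exp(−‖x‖²/2)/√m)·(exp(⟨w_1, x⟩), ..., exp(⟨w_m, x⟩)) be the PRF map. Then for all x, y ∈ ℝ^d, Var(⟨φ(x), φ(y)⟩) = (1/m)·(exp(‖x + y‖²) − 1)·exp(⟨x, y⟩)². -/

import Mathlib

/-!
The estimator is `exp (-(‖x‖² + ‖y‖²)/2) / m · ∑ᵢ exp ⟨wᵢ, x + y⟩`, a constant multiple of a sum of
`m` i.i.d. copies of `exp ⟨w, z⟩` with `z = x + y`, so its variance is `m` times the variance of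
one copy. The Gaussian moment generating function gives `𝔼 exp ⟨w, z⟩ = exp (‖z‖²/2)` and
`𝔼 exp ⟨w, z⟩² = 𝔼 exp ⟨w, 2z⟩ = exp (2‖z‖²)`, and `‖x + y‖² - ‖x‖² - ‖y‖² = 2⟨x, y⟩` turns the
prefactor into `exp ⟨x, y⟩²`.
-/

open MeasureTheory ProbabilityTheory

/-- The joint law of `m` i.i.d. standard Gaussian random vectors on `ℝ^d`. -/
noncomputable def iidStdGaussian (m d : ℕ) : Measure (Fin m → Fin d → ℝ) :=
  Measure.pi fun _ => Measure.pi fun _ => gaussianReal 0 1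

/-- The Positive Random Feature (PRF) map with `m` features:
`φ(x)_i = (exp (−‖x‖²/2)/√m) · exp ⟨w_i, x⟩`. -/
noncomputable def prf (m d : ℕ) (W : Fin m → Fin d → ℝ) (x : Fin d → ℝ) : Fin m → ℝ :=
  fun i => (Real.exp (-(∑ j, (x j) ^ 2) / 2) / Real.sqrt m) * Real.exp (∑ j, W i j * x j)

open Real

section StdGaussian

variable {ι : Type*} [Fintype ι]

lemma exp_sum_mul_eq_prod (w s : ι → ℝ) : exp (∑ j, w j * s j) = ∏ j, exp (s j * w j) := by
  simp only [exp_sum, mul_comm]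

lemma sq_exp_sum_mul (w s : ι → ℝ) :
    exp (∑ j, w j * s j) ^ 2 = exp (∑ j, w j * (2 * s j)) := by
  rw [← exp_nat_mul, Finset.mul_sum]
  push_cast
  exact congrArg exp (Finset.sum_congr rfl fun j _ => by ring)

lemma integrable_exp_sum_mul_stdGaussian (s : ι → ℝ) :
    Integrable (fun w => exp (∑ j, w j * s j)) (Measure.pi fun _ : ι => gaussianReal 0 1) := by
  simp_rw [exp_sum_mul_eq_prod]
  exact Integrable.fintype_prod fun j => integrable_exp_mul_gaussianReal (s j)

lemma integral_exp_sum_mul_stdGaussian (s : ι → ℝ) :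
    ∫ w, exp (∑ j, w j * s j) ∂(Measure.pi fun _ : ι => gaussianReal 0 1)
      = exp ((∑ j, s j ^ 2) / 2) := by
  simp_rw [exp_sum_mul_eq_prod]
  rw [integral_fintype_prod_eq_prod (fun j u => exp (s j * u)), Finset.sum_div, exp_sum]
  refine Finset.prod_congr rfl fun j _ => ?_
  simpa [mgf] using mgf_gaussianReal (μ := 0) (v := 1) (X := id) (by simp) (s j)

lemma memLp_two_exp_sum_mul_stdGaussian (s : ι → ℝ) :
    MemLp (fun w => exp (∑ j, w j * s j)) 2 (Measure.pi fun _ : ι => gaussianReal 0 1) := by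
  have hmeas : Measurable fun w : ι → ℝ => exp (∑ j, w j * s j) := by fun_prop
  refine (memLp_two_iff_integrable_sq hmeas.aestronglyMeasurable).2 ?_
  simp_rw [sq_exp_sum_mul]
  exact integrable_exp_sum_mul_stdGaussian _

lemma variance_exp_sum_mul_stdGaussian (s : ι → ℝ) :
    variance (fun w => exp (∑ j, w j * s j)) (Measure.pi fun _ : ι => gaussianReal 0 1)
      = exp (∑ j, s j ^ 2) * (exp (∑ j, s j ^ 2) - 1) := by
  rw [variance_eq_sub (memLp_two_exp_sum_mul_stdGaussian s)]
  simp only [Pi.pow_apply, sq_exp_sum_mul, integral_exp_sum_mul_stdGaussian]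
  have h2s : (∑ j, (2 * s j) ^ 2) / 2 = ∑ j, s j ^ 2 + ∑ j, s j ^ 2 := by
    simp only [mul_pow, ← Finset.mul_sum]
    ring
  rw [h2s, exp_add, ← exp_nat_mul]
  push_cast
  rw [mul_div_cancel₀ _ two_ne_zero]
  ring

end StdGaussian

lemma variance_sum_comp_eval_pi {ι Ω : Type*} [Fintype ι] [MeasurableSpace Ω] {μ : Measure Ω}
    [IsProbabilityMeasure μ] {f : Ω → ℝ} (hf : MemLp f 2 μ) :
    variance (fun ω : ι → Ω => ∑ i, f (ω i)) (Measure.pi fun _ => μ)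
      = Fintype.card ι * variance f μ := by
  simpa [Finset.sum_fn] using variance_sum_pi (μ := fun _ : ι => μ) (X := fun _ => f) fun _ => hf

lemma exp_neg_half_sq_mul_exp_sum_add_sq {ι : Type*} [Fintype ι] (x y : ι → ℝ) :
    exp (-(∑ j, x j ^ 2 + ∑ j, y j ^ 2) / 2) ^ 2 * exp (∑ j, (x j + y j) ^ 2)
      = exp (∑ j, x j * y j) ^ 2 := by
  have hsq : ∑ j, (x j + y j) ^ 2 = ∑ j, x j ^ 2 + ∑ j, y j ^ 2 + 2 * ∑ j, x j * y j := by
    rw [Finset.mul_sum, ← Finset.sum_add_distrib, ← Finset.sum_add_distrib]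
    exact Finset.sum_congr rfl fun j _ => by ring
  rw [← exp_nat_mul, ← exp_nat_mul, ← exp_add, hsq]
  congr 1
  push_cast
  ring

lemma prf_mul_prf (m d : ℕ) (W : Fin m → Fin d → ℝ) (x y : Fin d → ℝ) (i : Fin m) :
    prf m d W x i * prf m d W y i
      = exp (-(∑ j, x j ^ 2 + ∑ j, y j ^ 2) / 2) / m * exp (∑ j, W i j * (x j + y j)) := by
  simp only [prf]
  rw [mul_mul_mul_comm, div_mul_div_comm, ← exp_add, ← exp_add, mul_self_sqrt (Nat.cast_nonneg _),
    ← Finset.sum_add_distrib]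
  congr 3
  · ring
  · ext j
    ring

/-- Variance of the PRF estimator:
`Var ⟨φ(x), φ(y)⟩ = (1/m) (exp ‖x + y‖² − 1) exp(⟨x, y⟩)²`. -/
theorem variance_prf_inner (m d : ℕ) (hm : 0 < m) (x y : Fin d → ℝ) :
    variance (fun W => ∑ i, prf m d W x i * prf m d W y i) (iidStdGaussian m d)
      = (1 / m) * (Real.exp (∑ j, (x j + y j) ^ 2) - 1) * (Real.exp (∑ j, x j * y j)) ^ 2 := by
  simp_rw [prf_mul_prf, ← Finset.mul_sum]
  rw [iidStdGaussian, variance_const_mul,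
    variance_sum_comp_eval_pi (memLp_two_exp_sum_mul_stdGaussian _),
    variance_exp_sum_mul_stdGaussian, Fintype.card_fin]
  have hm' : (m : ℝ) ≠ 0 := by positivity
  have hexp := exp_neg_half_sq_mul_exp_sum_add_sq x y
  generalize exp (-(∑ j, x j ^ 2 + ∑ j, y j ^ 2) / 2) = a at hexp ⊢
  generalize exp (∑ j, (x j + y j) ^ 2) = E at hexp ⊢
  field_simp
  linear_combination (E - 1) * hexp
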